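/- arXiv:2408.00618 — 2 statements merged into one kernel-verified Lean document; each statement's English description precedes it below -/
import Mathlib

section
/- Let y ∈ ℝⁿ, let X ∈ ℝ^{n×p} be a matrix of continuous covariates with columns x_1,…,x_p, and let r : {1,…,n} → {1,…,L} be a categorical covariate with all group counts n_ℓ positive; write π̂_ℓ = n_ℓ/n, x̄_ℓ(j) = n_ℓ^{-1} ∑_{i : r(i)=ℓ} x_{ij}, and the within-group sample covariances Ĉov_ℓ(x_j, x_h) = n_ℓ^{-1} ∑_{i : r(i)=ℓ} x_{ij} x_{ih} − x̄_ℓ(j) x̄_ℓ(h). Assume the equal-covariance condition: Ĉov_ℓ(x_j, x_h) = Ĉov_1(x_j, x_h) for all ℓ = 1,…,L and all j, h = 1,…,p. Consider (a) the main-only model: minimize ∑_i (y_i − α₀ − ∑_j x_{ij} α_j − β_{r(i)})² subject to ∑_ℓ π̂_ℓ β_ℓ = 0; and (b) the fully cat-modified model: minimize ∑_i (y_i − α₀ − ∑_j x_{ij} α_j − β_{r(i)} − ∑_j x_{ij} γ_{j, r(i)})² subject to ∑_ℓ π̂_ℓ β_ℓ = 0 and ∑_ℓ π̂_ℓ γ_{j,ℓ}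 = 0 for every j = 1,…,p. Assume both constrained least-squares problems have unique minimizers. Then all p estimated main continuous-covariate effects coincide: α̂_j^M = α̂_j for every j = 1,…,p. -/
/-!
The ABCs only choose a parametrization: recentring intercepts and interaction coefficients by
their `π̂`-weighted means leaves the fitted values unchanged. Hence each constrained minimizer
is characterized by its residual being orthogonal to every direction of its (unconstrained)
model.

The cat-modified fit splits as a main-only fit with slopes `α` and group intercepts
`α₀ + β ℓ + ∑ j, x̄_ℓ(j) γ j ℓ`, plus the within-group centred interaction
`u i = ∑ j, (x i j - x̄_{r i}(j)) γ j (r i)`. The term `u` sums to zero over every group, and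
`∑ i, u i x i h = ∑ j, ∑ ℓ, n_ℓ Ĉov_ℓ(x_j, x_h) γ j ℓ`, which vanishes under equal covariances
and the ABCs on `γ`. So the residual of that main-only fit is orthogonal to the main-only
model, it is the main-only minimizer, and uniqueness gives `αM = α`.
-/

open Finset

/-- The (scaled) within-group sample covariance of `u` and `v` in group `ℓ` of the
categorical covariate `r`:
`Ĉov_ℓ(u, v) = n_ℓ⁻¹ ∑_{i : r i = ℓ} u i * v i − ū_ℓ * v̄_ℓ`. -/
noncomputable def groupCov {n L : ℕ} (u v : Fin n → ℝ) (r : Fin n → Fin L) (ℓ : Fin L) : ℝ :=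
  (∑ i ∈ Finset.univ.filter (fun i : Fin n => r i = ℓ), u i * v i) /
      ((Finset.univ.filter (fun i : Fin n => r i = ℓ)).card : ℝ) -
    ((∑ i ∈ Finset.univ.filter (fun i : Fin n => r i = ℓ), u i) /
      ((Finset.univ.filter (fun i : Fin n => r i = ℓ)).card : ℝ)) *
    ((∑ i ∈ Finset.univ.filter (fun i : Fin n => r i = ℓ), v i) /
      ((Finset.univ.filter (fun i : Fin n => r i = ℓ)).card : ℝ))

section LeastSquares

variable {ι : Type*} [Fintype ι]

theorem sum_sub_mul_sq (e v : ι → ℝ) (t : ℝ) :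
    ∑ i, (e i - t * v i) ^ 2 =
      ∑ i, e i ^ 2 - 2 * t * ∑ i, e i * v i + t ^ 2 * ∑ i, v i ^ 2 := by
  simp only [mul_sum, ← sum_sub_distrib, ← sum_add_distrib]
  exact sum_congr rfl fun i _ => by ring

theorem sum_mul_eq_zero_of_forall_sum_sq_le {e v : ι → ℝ}
    (h : ∀ t : ℝ, ∑ i, e i ^ 2 ≤ ∑ i, (e i - t * v i) ^ 2) : ∑ i, e i * v i = 0 := by
  have hdisc : discrim (∑ i, v i ^ 2) (-2 * ∑ i, e i * v i) 0 ≤ 0 :=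
    discrim_le_zero fun t => by have := h t; rw [sum_sub_mul_sq] at this; linarith
  rw [discrim] at hdisc
  nlinarith [sq_nonneg (∑ i, e i * v i)]

theorem sum_sq_le_sum_sub_sq_of_sum_mul_eq_zero {e v : ι → ℝ} (h : ∑ i, e i * v i = 0) :
    ∑ i, e i ^ 2 ≤ ∑ i, (e i - v i) ^ 2 := by
  have := sum_sub_mul_sq e v 1
  simp only [one_mul, one_pow] at this
  rw [this, h]
  linarith [sum_nonneg fun i (_ : i ∈ univ) => sq_nonneg (v i)]

end LeastSquares

theorem sum_mul_sub_weightedMean_eq_zero {κ : Type*} [Fintype κ] {w : κ → ℝ}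
    (hw : ∀ k, 0 ≤ w k) (c : κ → ℝ) :
    ∑ k, w k * (c k - (∑ k', w k' * c k') / ∑ k', w k') = 0 := by
  rcases eq_or_ne (∑ k, w k) 0 with h0 | h0
  · have hw0 : ∀ k, w k = 0 := fun k =>
      (sum_eq_zero_iff_of_nonneg fun k _ => hw k).1 h0 k (mem_univ k)
    simp [hw0]
  · simp only [mul_sub, sum_sub_distrib, ← sum_mul]
    rw [mul_div_cancel₀ _ h0, sub_self]

section Levels

variable {ι κ : Type*} [Fintype ι] [DecidableEq κ]

abbrev level (r : ι → κ) (ℓ : κ) : Finset ι := univ.filter fun i => r i = ℓ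

noncomputable def groupMean (u : ι → ℝ) (r : ι → κ) (ℓ : κ) : ℝ :=
  (∑ i ∈ level r ℓ, u i) / (level r ℓ).card

theorem sum_mul_comp_eq_zero_iff [Fintype κ] (f : ι → ℝ) (r : ι → κ) :
    (∀ d : κ → ℝ, ∑ i, f i * d (r i) = 0) ↔ ∀ ℓ, ∑ i ∈ level r ℓ, f i = 0 := by
  constructor
  · intro h ℓ
    simpa [sum_filter] using h fun k => if k = ℓ then 1 else 0
  · intro h d
    rw [← sum_fiberwise univ r]
    refine sum_eq_zero fun ℓ _ => ?_
    rw [sum_congr rfl fun i hi => by rw [(mem_filter.1 hi).2], ← sum_mul, h ℓ, zero_mul]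

theorem card_mul_groupMean (u : ι → ℝ) (r : ι → κ) (ℓ : κ) :
    (level r ℓ).card * groupMean u r ℓ = ∑ i ∈ level r ℓ, u i := by
  rcases (level r ℓ).eq_empty_or_nonempty with h | h
  · simp [h]
  · exact mul_div_cancel₀ _ (Nat.cast_ne_zero.2 h.card_pos.ne')

theorem sum_sub_groupMean (u : ι → ℝ) (r : ι → κ) (ℓ : κ) :
    ∑ i ∈ level r ℓ, (u i - groupMean u r ℓ) = 0 := by
  rw [sum_sub_distrib, sum_const, nsmul_eq_mul, card_mul_groupMean, sub_self]

end Levels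

theorem card_mul_groupCov {n L : ℕ} (u v : Fin n → ℝ) (r : Fin n → Fin L) (ℓ : Fin L) :
    (level r ℓ).card * groupCov u v r ℓ = ∑ i ∈ level r ℓ, (u i - groupMean u r ℓ) * v i := by
  have hcov : groupCov u v r ℓ = groupMean (u * v) r ℓ - groupMean u r ℓ * groupMean v r ℓ := rfl
  rw [hcov, mul_sub, ← mul_assoc, mul_comm _ (groupMean u r ℓ), mul_assoc, card_mul_groupMean,
    card_mul_groupMean, mul_sum]
  simp only [sub_mul, sum_sub_distrib, Pi.mul_apply]

section Models

variable {n p L : ℕ} (x : Fin n → Fin p → ℝ) (r : Fin n → Fin L)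

noncomputable def sampleProportion (ℓ : Fin L) : ℝ := (level r ℓ).card / n

def SatisfiesABC (b : Fin L → ℝ) : Prop := ∑ ℓ, sampleProportion r ℓ * b ℓ = 0

noncomputable def abcMean (c : Fin L → ℝ) : ℝ :=
  (∑ ℓ, sampleProportion r ℓ * c ℓ) / ∑ ℓ, sampleProportion r ℓ

theorem satisfiesABC_sub_abcMean (c : Fin L → ℝ) : SatisfiesABC r fun ℓ => c ℓ - abcMean r c :=
  sum_mul_sub_weightedMean_eq_zero (fun ℓ => by unfold sampleProportion; positivity) c

theorem sum_card_mul_eq_zero_of_satisfiesABC {b : Fin L → ℝ} (hb : SatisfiesABC r b) :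
    ∑ ℓ, ((level r ℓ).card : ℝ) * b ℓ = 0 := by
  obtain rfl | hn := eq_or_ne n 0
  · simp [fun ℓ => eq_empty_of_isEmpty (level r ℓ)]
  · have hsum : ∑ ℓ, ((level r ℓ).card : ℝ) * b ℓ = n * ∑ ℓ, sampleProportion r ℓ * b ℓ := by
      rw [mul_sum]
      exact sum_congr rfl fun ℓ _ => by
        rw [sampleProportion, ← mul_assoc, mul_div_cancel₀ _ (Nat.cast_ne_zero.2 hn)]
    rw [hsum, hb, mul_zero]

def mainFit (a0 : ℝ) (a : Fin p → ℝ) (b : Fin L → ℝ) (i : Fin n) : ℝ :=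
  a0 + ∑ j, x i j * a j + b (r i)

def catFit (a0 : ℝ) (a : Fin p → ℝ) (b : Fin L → ℝ) (g : Fin p → Fin L → ℝ) (i : Fin n) : ℝ :=
  a0 + ∑ j, x i j * a j + b (r i) + ∑ j, x i j * g j (r i)

theorem exists_satisfiesABC_mainFit_eq (a0 : ℝ) (a : Fin p → ℝ) (b : Fin L → ℝ) :
    ∃ a0' b', SatisfiesABC r b' ∧ mainFit x r a0' a b' = mainFit x r a0 a b :=
  ⟨a0 + abcMean r b, fun ℓ => b ℓ - abcMean r b, satisfiesABC_sub_abcMean r b, by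
    funext i; unfold mainFit; ring⟩

theorem exists_satisfiesABC_catFit_eq (a0 : ℝ) (a : Fin p → ℝ) (b : Fin L → ℝ)
    (g : Fin p → Fin L → ℝ) :
    ∃ a0' a' b' g', SatisfiesABC r b' ∧ (∀ j, SatisfiesABC r (g' j)) ∧
      catFit x r a0' a' b' g' = catFit x r a0 a b g :=
  ⟨a0 + abcMean r b, fun j => a j + abcMean r (g j), fun ℓ => b ℓ - abcMean r b,
    fun j ℓ => g j ℓ - abcMean r (g j), satisfiesABC_sub_abcMean r b,
    fun j => satisfiesABC_sub_abcMean r (g j), by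
    funext i; simp only [catFit, mul_add, mul_sub, sum_add_distrib, sum_sub_distrib]; ring⟩

theorem catFit_add_mul (a0 : ℝ) (a : Fin p → ℝ) (b d : Fin L → ℝ) (g w : Fin p → Fin L → ℝ)
    (t : ℝ) (i : Fin n) :
    catFit x r a0 a (fun ℓ => b ℓ + t * d ℓ) (fun j ℓ => g j ℓ + t * w j ℓ) i =
      catFit x r a0 a b g i + t * (d (r i) + ∑ j, x i j * w j (r i)) := by
  simp only [catFit, mul_add, sum_add_distrib, mul_sum]
  ring_nf

theorem sum_catResidual_mul_eq_zero {y : Fin n → ℝ} {α₀ : ℝ} {α : Fin p → ℝ} {β : Fin L → ℝ}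
    {γ : Fin p → Fin L → ℝ}
    (hmin : ∀ a0 a b g, SatisfiesABC r b → (∀ j, SatisfiesABC r (g j)) →
      ∑ i, (y i - catFit x r α₀ α β γ i) ^ 2 ≤ ∑ i, (y i - catFit x r a0 a b g i) ^ 2)
    (d : Fin L → ℝ) (w : Fin p → Fin L → ℝ) :
    ∑ i, (y i - catFit x r α₀ α β γ i) * (d (r i) + ∑ j, x i j * w j (r i)) = 0 := by
  refine sum_mul_eq_zero_of_forall_sum_sq_le fun t => ?_
  obtain ⟨a0, a, b, g, hb, hg, hfit⟩ := exists_satisfiesABC_catFit_eq x r α₀ α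
    (fun ℓ => β ℓ + t * d ℓ) (fun j ℓ => γ j ℓ + t * w j ℓ)
  calc _ ≤ _ := hmin a0 a b g hb hg
    _ = _ := by simp only [hfit, catFit_add_mul, sub_add_eq_sub_sub]

theorem eq_of_forall_sum_mainResidual_mul_eq_zero {y : Fin n → ℝ} {α₀M : ℝ} {αM : Fin p → ℝ}
    {βM : Fin L → ℝ}
    (huniq : ∀ a0 a b, SatisfiesABC r b →
      ∑ i, (y i - mainFit x r a0 a b i) ^ 2 ≤ ∑ i, (y i - mainFit x r α₀M αM βM i) ^ 2 →
        a = αM)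
    {a0 : ℝ} {a : Fin p → ℝ} {b : Fin L → ℝ}
    (horth : ∀ (c : Fin L → ℝ) (s : Fin p → ℝ),
      ∑ i, (y i - mainFit x r a0 a b i) * (c (r i) + ∑ j, x i j * s j) = 0) :
    a = αM := by
  obtain ⟨a0', b', hb', hfit⟩ := exists_satisfiesABC_mainFit_eq x r a0 a b
  refine huniq a0' a b' hb' ?_
  rw [hfit]
  have hdiff : ∀ i, y i - mainFit x r α₀M αM βM i = (y i - mainFit x r a0 a b i) -
      ((α₀M - a0 + (βM (r i) - b (r i))) + ∑ j, x i j * (αM j - a j)) := fun i => by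
    simp only [mainFit, mul_sub, sum_sub_distrib]; ring
  simp only [hdiff]
  exact sum_sq_le_sum_sub_sq_of_sum_mul_eq_zero
    (horth (fun ℓ => α₀M - a0 + (βM ℓ - b ℓ)) (fun j => αM j - a j))

noncomputable def centeredInteraction (g : Fin p → Fin L → ℝ) (i : Fin n) : ℝ :=
  ∑ j, (x i j - groupMean (x · j) r (r i)) * g j (r i)

theorem catFit_eq_mainFit_add_centeredInteraction (a0 : ℝ) (a : Fin p → ℝ) (b : Fin L → ℝ)
    (g : Fin p → Fin L → ℝ) (i : Fin n) :
    catFit x r a0 a b g i =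
      mainFit x r 0 a (fun ℓ => a0 + b ℓ + ∑ j, groupMean (x · j) r ℓ * g j ℓ) i +
        centeredInteraction x r g i := by
  simp only [catFit, mainFit, centeredInteraction, sub_mul, sum_sub_distrib]
  ring

theorem sum_level_centeredInteraction (g : Fin p → Fin L → ℝ) (ℓ : Fin L) :
    ∑ i ∈ level r ℓ, centeredInteraction x r g i = 0 := by
  rw [sum_congr rfl fun i hi => by rw [centeredInteraction, (mem_filter.1 hi).2], sum_comm]
  exact sum_eq_zero fun j _ => by rw [← sum_mul, sum_sub_groupMean, zero_mul]

theorem sum_centeredInteraction_mul (g : Fin p → Fin L → ℝ) (h : Fin p) :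
    ∑ i, centeredInteraction x r g i * x i h =
      ∑ j, ∑ ℓ, g j ℓ * ((level r ℓ).card * groupCov (x · j) (x · h) r ℓ) := by
  rw [← sum_fiberwise univ r, sum_comm (s := univ) (t := univ)]
  refine sum_congr rfl fun ℓ _ => ?_
  simp_rw [card_mul_groupCov, mul_sum]
  rw [sum_congr rfl fun i hi => by rw [centeredInteraction, (mem_filter.1 hi).2, sum_mul], sum_comm]
  exact sum_congr rfl fun j _ => sum_congr rfl fun i _ => by ring

theorem sum_centeredInteraction_mul_eq_zero {C : Fin p → Fin p → ℝ}
    (hcov : ∀ ℓ j h, groupCov (x · j) (x · h) r ℓ = C j h) {g : Fin p → Fin L → ℝ}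
    (hg : ∀ j, SatisfiesABC r (g j)) (h : Fin p) :
    ∑ i, centeredInteraction x r g i * x i h = 0 := by
  rw [sum_centeredInteraction_mul]
  refine sum_eq_zero fun j _ => ?_
  simp_rw [hcov]
  calc ∑ ℓ, g j ℓ * ((level r ℓ).card * C j h)
      = (∑ ℓ, ((level r ℓ).card : ℝ) * g j ℓ) * C j h := by
        rw [sum_mul]; exact sum_congr rfl fun ℓ _ => by ring
    _ = 0 := by rw [sum_card_mul_eq_zero_of_satisfiesABC r (hg j), zero_mul]

theorem sum_centeredInteraction_mul_mainDirection_eq_zero {C : Fin p → Fin p → ℝ}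
    (hcov : ∀ ℓ j h, groupCov (x · j) (x · h) r ℓ = C j h) {g : Fin p → Fin L → ℝ}
    (hg : ∀ j, SatisfiesABC r (g j)) (c : Fin L → ℝ) (s : Fin p → ℝ) :
    ∑ i, centeredInteraction x r g i * (c (r i) + ∑ j, x i j * s j) = 0 := by
  simp only [mul_add, sum_add_distrib, mul_sum, ← mul_assoc]
  rw [(sum_mul_comp_eq_zero_iff _ r).2 (sum_level_centeredInteraction x r g), zero_add, sum_comm]
  simp only [← sum_mul, sum_centeredInteraction_mul_eq_zero x r hcov hg, zero_mul, sum_const_zero]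

end Models

theorem abc_full_interaction_slope_invariance_general
    {n p L : ℕ} (hL : 0 < L)
    (y : Fin n → ℝ) (x : Fin n → Fin p → ℝ) (r : Fin n → Fin L)
    -- equal-covariance condition
    (heqcov : ∀ (ℓ : Fin L) (j h : Fin p),
      groupCov (fun i => x i j) (fun i => x i h) r ℓ =
        groupCov (fun i => x i j) (fun i => x i h) r ⟨0, hL⟩)
    -- main-only estimates
    (α₀M : ℝ) (αM : Fin p → ℝ) (βM : Fin L → ℝ)
    -- cat-modified estimates
    (α₀ : ℝ) (α : Fin p → ℝ) (β : Fin L → ℝ) (γ : Fin p → Fin L → ℝ)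
    -- ... and it is the unique such minimizer
    (hMuniq : ∀ (a0 : ℝ) (a : Fin p → ℝ) (b : Fin L → ℝ),
      (∑ ℓ : Fin L,
        (((univ.filter (fun i : Fin n => r i = ℓ)).card : ℝ) / n) * b ℓ = 0) →
      (∑ i : Fin n, (y i - (a0 + (∑ j : Fin p, x i j * a j) + b (r i))) ^ 2 ≤
        ∑ i : Fin n, (y i - (α₀M + (∑ j : Fin p, x i j * αM j) + βM (r i))) ^ 2) →
      a0 = α₀M ∧ a = αM ∧ b = βM)
    -- ABCs for the cat-modified estimator
    (hC2 : ∀ j : Fin p, ∑ ℓ : Fin L,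
      (((univ.filter (fun i : Fin n => r i = ℓ)).card : ℝ) / n) * γ j ℓ = 0)
    -- the cat-modified estimator is a constrained least-squares minimizer
    (hCmin : ∀ (a0 : ℝ) (a : Fin p → ℝ) (b : Fin L → ℝ) (g : Fin p → Fin L → ℝ),
      (∑ ℓ : Fin L,
        (((univ.filter (fun i : Fin n => r i = ℓ)).card : ℝ) / n) * b ℓ = 0) →
      (∀ j : Fin p, ∑ ℓ : Fin L,
        (((univ.filter (fun i : Fin n => r i = ℓ)).card : ℝ) / n) * g j ℓ = 0) →
      ∑ i : Fin n, (y i - (α₀ + (∑ j : Fin p, x i j * α j) + β (r i) +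
          ∑ j : Fin p, x i j * γ j (r i))) ^ 2 ≤
        ∑ i : Fin n, (y i - (a0 + (∑ j : Fin p, x i j * a j) + b (r i) +
          ∑ j : Fin p, x i j * g j (r i))) ^ 2) :
    ∀ j : Fin p, αM j = α j := by
  set c : Fin L → ℝ := fun ℓ => α₀ + β ℓ + ∑ j, groupMean (x · j) r ℓ * γ j ℓ
  have hres : ∀ i, y i - mainFit x r 0 α c i =
      (y i - catFit x r α₀ α β γ i) + centeredInteraction x r γ i := fun i => by
    rw [catFit_eq_mainFit_add_centeredInteraction]; ring
  have hslope : α = αM := eq_of_forall_sum_mainResidual_mul_eq_zero x r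
    (fun a0 a b hb hle => (hMuniq a0 a b hb hle).2.1) (a0 := 0) (b := c) fun d s => by
      simp only [hres, add_mul, sum_add_distrib, sum_catResidual_mul_eq_zero x r hCmin d fun j _ => s j,
        sum_centeredInteraction_mul_mainDirection_eq_zero x r (heqcov · · ·) hC2 d s, add_zero]
  exact fun j => (congrFun hslope j).symm

/-- Theorem 4: invariance of all main continuous effects when every
continuous covariate is cat-modified.  Under abundance-based constraints and the
equal-covariance condition, all `p` estimated main continuous-covariate effects of the
main-only model coincide with those of the fully cat-modified model.  Both constrained
least-squares problems are assumed to have unique minimizers. -/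
theorem abc_full_interaction_slope_invariance
    {n p L : ℕ} (hL : 0 < L)
    (y : Fin n → ℝ) (x : Fin n → Fin p → ℝ) (r : Fin n → Fin L)
    (hcount : ∀ ℓ : Fin L, 0 < (univ.filter (fun i : Fin n => r i = ℓ)).card)
    -- equal-covariance condition
    (heqcov : ∀ (ℓ : Fin L) (j h : Fin p),
      groupCov (fun i => x i j) (fun i => x i h) r ℓ =
        groupCov (fun i => x i j) (fun i => x i h) r ⟨0, hL⟩)
    -- main-only estimates
    (α₀M : ℝ) (αM : Fin p → ℝ) (βM : Fin L → ℝ)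
    -- cat-modified estimates
    (α₀ : ℝ) (α : Fin p → ℝ) (β : Fin L → ℝ) (γ : Fin p → Fin L → ℝ)
    -- ABC for the main-only estimator
    (hM : ∑ ℓ : Fin L,
      (((univ.filter (fun i : Fin n => r i = ℓ)).card : ℝ) / n) * βM ℓ = 0)
    -- the main-only estimator is a constrained least-squares minimizer
    (hMmin : ∀ (a0 : ℝ) (a : Fin p → ℝ) (b : Fin L → ℝ),
      (∑ ℓ : Fin L,
        (((univ.filter (fun i : Fin n => r i = ℓ)).card : ℝ) / n) * b ℓ = 0) →
      ∑ i : Fin n, (y i - (α₀M + (∑ j : Fin p, x i j * αM j) + βM (r i))) ^ 2 ≤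
        ∑ i : Fin n, (y i - (a0 + (∑ j : Fin p, x i j * a j) + b (r i))) ^ 2)
    -- ... and it is the unique such minimizer
    (hMuniq : ∀ (a0 : ℝ) (a : Fin p → ℝ) (b : Fin L → ℝ),
      (∑ ℓ : Fin L,
        (((univ.filter (fun i : Fin n => r i = ℓ)).card : ℝ) / n) * b ℓ = 0) →
      (∑ i : Fin n, (y i - (a0 + (∑ j : Fin p, x i j * a j) + b (r i))) ^ 2 ≤
        ∑ i : Fin n, (y i - (α₀M + (∑ j : Fin p, x i j * αM j) + βM (r i))) ^ 2) →
      a0 = α₀M ∧ a = αM ∧ b = βM)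
    -- ABCs for the cat-modified estimator
    (hC1 : ∑ ℓ : Fin L,
      (((univ.filter (fun i : Fin n => r i = ℓ)).card : ℝ) / n) * β ℓ = 0)
    (hC2 : ∀ j : Fin p, ∑ ℓ : Fin L,
      (((univ.filter (fun i : Fin n => r i = ℓ)).card : ℝ) / n) * γ j ℓ = 0)
    -- the cat-modified estimator is a constrained least-squares minimizer
    (hCmin : ∀ (a0 : ℝ) (a : Fin p → ℝ) (b : Fin L → ℝ) (g : Fin p → Fin L → ℝ),
      (∑ ℓ : Fin L,
        (((univ.filter (fun i : Fin n => r i = ℓ)).card : ℝ) / n) * b ℓ = 0) →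
      (∀ j : Fin p, ∑ ℓ : Fin L,
        (((univ.filter (fun i : Fin n => r i = ℓ)).card : ℝ) / n) * g j ℓ = 0) →
      ∑ i : Fin n, (y i - (α₀ + (∑ j : Fin p, x i j * α j) + β (r i) +
          ∑ j : Fin p, x i j * γ j (r i))) ^ 2 ≤
        ∑ i : Fin n, (y i - (a0 + (∑ j : Fin p, x i j * a j) + b (r i) +
          ∑ j : Fin p, x i j * g j (r i))) ^ 2)
    -- ... and it is the unique such minimizer
    (hCuniq : ∀ (a0 : ℝ) (a : Fin p → ℝ) (b : Fin L → ℝ) (g : Fin p → Fin L → ℝ),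
      (∑ ℓ : Fin L,
        (((univ.filter (fun i : Fin n => r i = ℓ)).card : ℝ) / n) * b ℓ = 0) →
      (∀ j : Fin p, ∑ ℓ : Fin L,
        (((univ.filter (fun i : Fin n => r i = ℓ)).card : ℝ) / n) * g j ℓ = 0) →
      (∑ i : Fin n, (y i - (a0 + (∑ j : Fin p, x i j * a j) + b (r i) +
          ∑ j : Fin p, x i j * g j (r i))) ^ 2 ≤
        ∑ i : Fin n, (y i - (α₀ + (∑ j : Fin p, x i j * α j) + β (r i) +
          ∑ j : Fin p, x i j * γ j (r i))) ^ 2) →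
      a0 = α₀ ∧ a = α ∧ b = β ∧ g = γ) :
    ∀ j : Fin p, αM j = α j :=
  abc_full_interaction_slope_invariance_general hL y x r heqcov α₀M αM βM α₀ α β γ hMuniq hC2 hCmin
end

section
/- Let y ∈ ℝⁿ, X_* ∈ ℝ^{n×p}, X₀ ∈ ℝ^{n×q₀}, X₁ ∈ ℝ^{n×q₁}, and let A ∈ ℝ^{m×q₁} be a constraint matrix acting on the coefficients of X₁ only. Let Q be a matrix whose columns form a basis of the null space {β₁ ∈ ℝ^{q₁} : A β₁ = 0}, and let H₀ be the orthogonal projection of ℝⁿ onto the column span of X₀. Assume [X_* X₀] and [X_* X₀ X₁Q] have full column rank, and assume the orthogonality condition X_*ᵀ (I − H₀) X₁ Q = 0. Let (β̂_*, β̂₀, β̂₁) minimize ‖y − X_* β_* − X₀ β₀ − X₁ β₁‖² subject to A β₁ = 0, and let (β̂_*^M, β̂₀^M) minimize ‖y − X_* β_* − X₀ β₀‖². Then β̂_*^M = β̂_*. -/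
/-!
Write `β₁ = Q w` and `H₀ X₁ Q w = X₀ w₀`. The vector `g = (I - H₀) X₁ Q w` is orthogonal to the
columns of `Xs` by the orthogonality condition, and to those of `X₀` because `H₀` is a symmetric
projection fixing `X₀`. The residual of the constrained fit is orthogonal to the columns of
`Z = [Xs X₀]`, hence so is that residual plus `g`, which is `y - Z (βs, β₀ + w₀)`. Thus
`(βs, β₀ + w₀)` and `(βsM, β₀M)` both solve the normal equations `Zᵀ (y - Z b) = 0`, which have
a unique solution because `Z` has full column rank.
-/

open Matrix

namespace Matrix

variable {ι κ : Type*}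

theorem mulVec_injective_of_rank_eq_card [Fintype κ] {R : Type*} [Field R] {M : Matrix ι κ R}
    (h : M.rank = Fintype.card κ) : Function.Injective M.mulVec :=
  mulVec_injective_iff.mpr <| linearIndependent_iff_card_eq_finrank_span.mpr <| by
    rw [← h, rank_eq_finrank_span_cols]; rfl

theorem dotProduct_eq_zero_of_forall_dotProduct_sub_smul_le [Fintype ι] {r u : ι → ℝ}
    (h : ∀ t : ℝ, r ⬝ᵥ r ≤ (r - t • u) ⬝ᵥ (r - t • u)) : u ⬝ᵥ r = 0 := by
  have hquad : ∀ t : ℝ, 0 ≤ (u ⬝ᵥ u) * (t * t) + (-2 * (u ⬝ᵥ r)) * t + 0 := fun t => by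
    have := h t
    simp only [sub_dotProduct, dotProduct_sub, smul_dotProduct, dotProduct_smul, smul_eq_mul,
      dotProduct_comm r u] at this
    linarith
  have := discrim_le_zero hquad
  rw [discrim] at this
  nlinarith [sq_nonneg (u ⬝ᵥ r)]

theorem transpose_mul_one_sub_eq_zero [Fintype ι] [DecidableEq ι] {R : Type*} [CommRing R]
    {P : Matrix ι ι R} {X : Matrix ι κ R} (hP : Pᵀ = P) (hPX : P * X = X) : Xᵀ * (1 - P) = 0 := by
  rw [Matrix.mul_sub, Matrix.mul_one, ← hP, ← transpose_mul, hPX, sub_self]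

theorem eq_of_transpose_mulVec_sub_eq_zero [Fintype ι] [Fintype κ] {M : Matrix ι κ ℝ}
    (hM : Function.Injective M.mulVec) {y : ι → ℝ} {b₁ b₂ : κ → ℝ}
    (h₁ : Mᵀ *ᵥ (y - M *ᵥ b₁) = 0) (h₂ : Mᵀ *ᵥ (y - M *ᵥ b₂) = 0) : b₁ = b₂ := by
  have hker : b₂ - b₁ ∈ LinearMap.ker (Mᵀ * M).mulVecLin := by
    rw [mulVec_sub] at h₁ h₂
    rw [LinearMap.mem_ker, mulVecLin_apply, ← mulVec_mulVec, mulVec_sub, mulVec_sub]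
    linear_combination h₁ - h₂
  rw [ker_mulVecLin_transpose_mul_self, LinearMap.mem_ker, mulVecLin_apply, mulVec_sub,
    sub_eq_zero] at hker
  exact (hM hker).symm

end Matrix

def IsLeastSquares {ι κ : Type*} [Fintype ι] [Fintype κ] (M : Matrix ι κ ℝ) (y : ι → ℝ)
    (b : κ → ℝ) : Prop :=
  ∀ b', ∑ i, (y i - (M *ᵥ b) i) ^ 2 ≤ ∑ i, (y i - (M *ᵥ b') i) ^ 2

namespace IsLeastSquares

variable {ι κ : Type*} [Fintype ι] [Fintype κ] {M : Matrix ι κ ℝ} {y : ι → ℝ} {b : κ → ℝ}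

theorem transpose_mulVec_sub_eq_zero (h : IsLeastSquares M y b) : Mᵀ *ᵥ (y - M *ᵥ b) = 0 := by
  have sum_sq : ∀ f : ι → ℝ, ∑ i, (y i - f i) ^ 2 = (y - f) ⬝ᵥ (y - f) := fun f => by
    simp only [dotProduct, Pi.sub_apply, sq]
  have horth : ∀ v, (M *ᵥ v) ⬝ᵥ (y - M *ᵥ b) = 0 := fun v =>
    dotProduct_eq_zero_of_forall_dotProduct_sub_smul_le fun t => by
      simpa only [sum_sq, mulVec_add, mulVec_smul, sub_add_eq_sub_sub] using h (b + t • v)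
  have := horth (Mᵀ *ᵥ (y - M *ᵥ b))
  rwa [dotProduct_comm, dotProduct_mulVec, ← mulVec_transpose, dotProduct_self_eq_zero] at this

theorem fromCols_sumElim {κ₁ κ₂ : Type*} [Fintype κ₁] [Fintype κ₂] {M₁ : Matrix ι κ₁ ℝ}
    {M₂ : Matrix ι κ₂ ℝ} {b₁ : κ₁ → ℝ} {b₂ : κ₂ → ℝ}
    (h : ∀ b₁' b₂', ∑ i, (y i - ((M₁ *ᵥ b₁) i + (M₂ *ᵥ b₂) i)) ^ 2 ≤
      ∑ i, (y i - ((M₁ *ᵥ b₁') i + (M₂ *ᵥ b₂') i)) ^ 2) :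
    IsLeastSquares (fromCols M₁ M₂) y (Sum.elim b₁ b₂) := fun b' => by
  rw [← Sum.elim_comp_inl_inr b']
  simpa only [fromCols_mulVec_sumElim, Pi.add_apply] using h _ _

end IsLeastSquares

theorem constrained_ols_block_invariance_general
    {n p q₀ q₁ m d : ℕ}
    (y : Fin n → ℝ)
    (Xs : Matrix (Fin n) (Fin p) ℝ)
    (X₀ : Matrix (Fin n) (Fin q₀) ℝ)
    (X₁ : Matrix (Fin n) (Fin q₁) ℝ)
    (A : Matrix (Fin m) (Fin q₁) ℝ)
    -- the columns of Q form a basis of the null space of A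
    (Q : Matrix (Fin q₁) (Fin d) ℝ)
    (hQspan : ∀ b1 : Fin q₁ → ℝ, A.mulVec b1 = 0 ↔ ∃ w : Fin d → ℝ, b1 = Q.mulVec w)
    -- H₀ is the orthogonal projection onto the column span of X₀
    (H₀ : Matrix (Fin n) (Fin n) ℝ)
    (hH₀symm : H₀ᵀ = H₀)
    (hH₀fix : H₀ * X₀ = X₀)
    (hH₀range : ∀ v : Fin n → ℝ, ∃ w : Fin q₀ → ℝ, H₀.mulVec v = X₀.mulVec w)
    -- full column rank of the (reparametrized) designs
    (hrank1 : (Matrix.fromCols Xs X₀).rank = p + q₀)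
    -- orthogonality condition
    (horth : Xsᵀ * (1 - H₀) * (X₁ * Q) = 0)
    -- OLS estimates from the regression without X₁
    (βsM : Fin p → ℝ) (β₀M : Fin q₀ → ℝ)
    (hMmin : ∀ (bs : Fin p → ℝ) (b0 : Fin q₀ → ℝ),
      ∑ i : Fin n, (y i - (Xs.mulVec βsM i + X₀.mulVec β₀M i)) ^ 2 ≤
        ∑ i : Fin n, (y i - (Xs.mulVec bs i + X₀.mulVec b0 i)) ^ 2)
    -- constrained least-squares estimates from the regression including X₁
    (βs : Fin p → ℝ) (β₀ : Fin q₀ → ℝ) (β₁ : Fin q₁ → ℝ)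
    (hconstr : A.mulVec β₁ = 0)
    (hmin : ∀ (bs : Fin p → ℝ) (b0 : Fin q₀ → ℝ) (b1 : Fin q₁ → ℝ),
      A.mulVec b1 = 0 →
      ∑ i : Fin n, (y i - (Xs.mulVec βs i + X₀.mulVec β₀ i + X₁.mulVec β₁ i)) ^ 2 ≤
        ∑ i : Fin n, (y i - (Xs.mulVec bs i + X₀.mulVec b0 i + X₁.mulVec b1 i)) ^ 2) :
    βsM = βs := by
  obtain ⟨w, rfl⟩ := (hQspan β₁).mp hconstr
  obtain ⟨w₀, hw₀⟩ := hH₀range (X₁ *ᵥ Q *ᵥ w)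
  set Z := fromCols Xs X₀
  have hZ : Function.Injective Z.mulVec := mulVec_injective_of_rank_eq_card (by simpa using hrank1)
  have hsmall : Zᵀ *ᵥ (y - Z *ᵥ Sum.elim βsM β₀M) = 0 :=
    (IsLeastSquares.fromCols_sumElim hMmin).transpose_mulVec_sub_eq_zero
  have hbig : Zᵀ *ᵥ (y - X₁ *ᵥ Q *ᵥ w - Z *ᵥ Sum.elim βs β₀) = 0 :=
    (IsLeastSquares.fromCols_sumElim fun bs b0 => by
      simpa only [Pi.sub_apply, sub_sub, add_comm ((X₁ *ᵥ Q *ᵥ w) _)] using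
        hmin bs b0 _ hconstr).transpose_mulVec_sub_eq_zero
  have hg_orth : Zᵀ *ᵥ (X₁ *ᵥ Q *ᵥ w - X₀ *ᵥ w₀) = 0 := by
    have hg : X₁ *ᵥ Q *ᵥ w - X₀ *ᵥ w₀ = ((1 - H₀) * (X₁ * Q)) *ᵥ w := by
      rw [← mulVec_mulVec, ← mulVec_mulVec, sub_mulVec, one_mulVec, hw₀]
    rw [hg, mulVec_mulVec, ← Matrix.mul_assoc, transpose_fromCols, fromRows_mul, fromRows_mul,
      horth, transpose_mul_one_sub_eq_zero hH₀symm hH₀fix, Matrix.zero_mul, fromRows_zero,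
      zero_mulVec]
  have hshifted : Zᵀ *ᵥ (y - Z *ᵥ Sum.elim βs (β₀ + w₀)) = 0 := by
    have : y - Z *ᵥ Sum.elim βs (β₀ + w₀) =
        (y - X₁ *ᵥ Q *ᵥ w - Z *ᵥ Sum.elim βs β₀) + (X₁ *ᵥ Q *ᵥ w - X₀ *ᵥ w₀) := by
      simp only [Z, fromCols_mulVec_sumElim, mulVec_add]
      abel
    rw [this, mulVec_add, hbig, hg_orth, add_zero]
  exact (Sum.elim_eq_iff.mp (eq_of_transpose_mulVec_sub_eq_zero hZ hsmall hshifted)).1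

/-- FWL-type invariance of a coefficient block with linearly
constrained added regressors.  The coefficients on `X₁` are constrained by
`A β₁ = 0`; the columns of `Q` form a basis of the null space of `A`.  If
`Xsᵀ (I − H₀) X₁ Q = 0`, where `H₀` is the orthogonal projection onto the column span
of `X₀`, and both (reparametrized) designs have full column rank, then the coefficient
block on `Xs` from the constrained regression including `X₁` equals the OLS coefficient
block on `Xs` from the regression without `X₁`. -/
theorem constrained_ols_block_invariance
    {n p q₀ q₁ m d : ℕ}
    (y : Fin n → ℝ)
    (Xs : Matrix (Fin n) (Fin p) ℝ)
    (X₀ : Matrix (Fin n) (Fin q₀) ℝ)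
    (X₁ : Matrix (Fin n) (Fin q₁) ℝ)
    (A : Matrix (Fin m) (Fin q₁) ℝ)
    -- the columns of Q form a basis of the null space of A
    (Q : Matrix (Fin q₁) (Fin d) ℝ)
    (hQspan : ∀ b1 : Fin q₁ → ℝ, A.mulVec b1 = 0 ↔ ∃ w : Fin d → ℝ, b1 = Q.mulVec w)
    (hQindep : ∀ w : Fin d → ℝ, Q.mulVec w = 0 → w = 0)
    -- H₀ is the orthogonal projection onto the column span of X₀
    (H₀ : Matrix (Fin n) (Fin n) ℝ)
    (hH₀symm : H₀ᵀ = H₀)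
    (hH₀idem : H₀ * H₀ = H₀)
    (hH₀fix : H₀ * X₀ = X₀)
    (hH₀range : ∀ v : Fin n → ℝ, ∃ w : Fin q₀ → ℝ, H₀.mulVec v = X₀.mulVec w)
    -- full column rank of the (reparametrized) designs
    (hrank1 : (Matrix.fromCols Xs X₀).rank = p + q₀)
    (hrank2 : (Matrix.fromCols (Matrix.fromCols Xs X₀) (X₁ * Q)).rank = p + q₀ + d)
    -- orthogonality condition
    (horth : Xsᵀ * (1 - H₀) * (X₁ * Q) = 0)
    -- OLS estimates from the regression without X₁
    (βsM : Fin p → ℝ) (β₀M : Fin q₀ → ℝ)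
    (hMmin : ∀ (bs : Fin p → ℝ) (b0 : Fin q₀ → ℝ),
      ∑ i : Fin n, (y i - (Xs.mulVec βsM i + X₀.mulVec β₀M i)) ^ 2 ≤
        ∑ i : Fin n, (y i - (Xs.mulVec bs i + X₀.mulVec b0 i)) ^ 2)
    -- constrained least-squares estimates from the regression including X₁
    (βs : Fin p → ℝ) (β₀ : Fin q₀ → ℝ) (β₁ : Fin q₁ → ℝ)
    (hconstr : A.mulVec β₁ = 0)
    (hmin : ∀ (bs : Fin p → ℝ) (b0 : Fin q₀ → ℝ) (b1 : Fin q₁ → ℝ),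
      A.mulVec b1 = 0 →
      ∑ i : Fin n, (y i - (Xs.mulVec βs i + X₀.mulVec β₀ i + X₁.mulVec β₁ i)) ^ 2 ≤
        ∑ i : Fin n, (y i - (Xs.mulVec bs i + X₀.mulVec b0 i + X₁.mulVec b1 i)) ^ 2) :
    βsM = βs :=
  constrained_ols_block_invariance_general y Xs X₀ X₁ A Q hQspan H₀ hH₀symm hH₀fix hH₀range hrank1
    horth βsM β₀M hMmin βs β₀ β₁ hconstr hmin
end
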